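/- For each finite type σ over Ω and countable ordinal ζ, if f_ξ ∈ Ω^mon_σ for all ξ < ζ, then limsup_{ξ→ζ} f_ξ ∈ Ω^mon_σ; that is, the class of hereditarily monotone functionals is closed under limsup of countably-indexed families. -/

import Mathlib

/-!  Framework: finite type structure over Ω = countable ordinals,
     limsup/liminf, transfinite iteration functionals, hereditarily
     positive and hereditarily monotone functionals. -/

noncomputable section
namespace IterOrd

open Ordinal

theorem omega1_pos : (0 : Ordinal) < ω₁ := Ordinal.omega0_pos.trans Ordinal.omega0_lt_omega_one

/-- `Om` is Ω, the set of countable ordinals (ordinals `< ω₁`). -/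
abbrev Om : Type 1 := {o : Ordinal // o < ω₁}

/-- Infimum of a subset of Ω (the minimum for nonempty sets; `0` for `∅`). -/
def infOm (s : Set Om) : Om :=
  ⟨sInf (Subtype.val '' s), by
    rcases (Subtype.val '' s).eq_empty_or_nonempty with h | h
    · rw [h]; simpa using omega1_pos
    · obtain ⟨x, _, he⟩ := csInf_mem h
      exact he ▸ x.2⟩

/-- Supremum of a subset of Ω.  Whenever the supremum of the set exists in Ω
(in particular for every countable subset, by regularity of `ω₁`) this is the
genuine supremum; otherwise it takes a junk value. -/
def supOm (s : Set Om) : Om :=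
  if h : sSup (Subtype.val '' s) < ω₁ then ⟨sSup (Subtype.val '' s), h⟩ else ⟨0, omega1_pos⟩

/-- Finite types over the base type `o` (interpreted as Ω). -/
inductive Ty : Type
  | base : Ty
  | arrow : Ty → Ty → Ty
deriving DecidableEq

/-- The full type structure over Ω: `El base = Ω` and
`El (arrow σ τ)` is the set of all functions `El σ → El τ`. -/
@[reducible] def El : Ty → Type 1
  | .base => Om
  | .arrow σ τ => El σ → El τ

/-- The order on each `El σ`: the ordinal order at base type, pointwise at arrow types. -/
def Le : (σ : Ty) → El σ → El σ → Prop
  | .base => fun x y => x ≤ y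
  | .arrow σ τ => fun f g => ∀ x : El σ, Le τ (f x) (g x)

/-- Suprema, computed pointwise at function types. -/
def supEl : (σ : Ty) → Set (El σ) → El σ
  | .base => supOm
  | .arrow σ τ => fun S (x : El σ) => supEl τ ((fun f : El (.arrow σ τ) => f x) '' S)

/-- Infima, computed pointwise at function types. -/
def infEl : (σ : Ty) → Set (El σ) → El σ
  | .base => infOm
  | .arrow σ τ => fun S (x : El σ) => infEl τ ((fun f : El (.arrow σ τ) => f x) '' S)

/-- `limsup_{ξ→ζ} f ξ = inf_{γ<ζ} sup_{γ≤ξ<ζ} f ξ`. -/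
def limsupEl (σ : Ty) (ζ : Ordinal) (f : ∀ ξ : Ordinal, ξ < ζ → El σ) : El σ :=
  infEl σ {y | ∃ γ, ∃ _ : γ < ζ, y = supEl σ {z | ∃ ξ, ∃ h : ξ < ζ, γ ≤ ξ ∧ z = f ξ h}}

/-- `liminf_{ξ→ζ} f ξ = sup_{γ<ζ} inf_{γ≤ξ<ζ} f ξ`. -/
def liminfEl (σ : Ty) (ζ : Ordinal) (f : ∀ ξ : Ordinal, ξ < ζ → El σ) : El σ :=
  supEl σ {y | ∃ γ, ∃ _ : γ < ζ, y = infEl σ {z | ∃ ξ, ∃ h : ξ < ζ, γ ≤ ξ ∧ z = f ξ h}}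

/-- `limsup` of a ζ-indexed sequence of ordinals. -/
def oLimsup (ζ : Ordinal) (a : Ordinal → Ordinal) : Ordinal :=
  sInf {s | ∃ γ, γ < ζ ∧ s = sSup (a '' {ξ | γ ≤ ξ ∧ ξ < ζ})}

/-- `liminf` of a ζ-indexed sequence of ordinals. -/
def oLiminf (ζ : Ordinal) (a : Ordinal → Ordinal) : Ordinal :=
  sSup {s | ∃ γ, γ < ζ ∧ s = sInf (a '' {ξ | γ ≤ ξ ∧ ξ < ζ})}

/-- The α-iteration functional of type σ:
`Iter 0 f x = x`, `Iter (α+1) f x = f (Iter α f x)`, and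
`Iter μ f x = limsup_{ξ→μ} Iter ξ f x` for limit μ. -/
def Iter (σ : Ty) (α : Ordinal) : (El σ → El σ) → El σ → El σ :=
  Ordinal.limitRecOn (motive := fun _ => (El σ → El σ) → El σ → El σ) α
    (fun _ x => x)
    (fun _ ih f x => f (ih f x))
    (fun μ _ ih f x => limsupEl σ μ (fun ξ h => ih ξ h f x))

/-- The pair (hereditarily positive, ≤hp), defined simultaneously by recursion on the type.
Every element of `Ω` and of `Ω_{ρ→τ}` with `ρ ≠ τ` is h.p., and `≤hp` there is `≤`;
`f : Ω_{τ→τ}` is h.p. iff it preserves h.p., is inflationary on h.p. arguments and is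
monotone (w.r.t. `≤hp`) on h.p. arguments; `f ≤hp f'` on `Ω_{τ→τ}` iff `f x ≤hp f' x`
for every h.p. `x`. -/
def HPaux : (σ : Ty) → (El σ → Prop) × (El σ → El σ → Prop)
  | .base => ⟨fun _ => True, fun x y => x ≤ y⟩
  | .arrow ρ τ =>
      ⟨fun f =>
        if h : ρ = τ then
          (∀ x, (HPaux ρ).1 x → (HPaux τ).1 (f x)) ∧
          (∀ x, (HPaux ρ).1 x → (HPaux τ).2 (cast (congrArg El h) x) (f x)) ∧
          (∀ x y, (HPaux ρ).1 x → (HPaux ρ).1 y → (HPaux ρ).2 x y → (HPaux τ).2 (f x) (f y))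
        else True,
       fun f g =>
        if ρ = τ then ∀ x, (HPaux ρ).1 x → (HPaux τ).2 (f x) (g x)
        else Le (.arrow ρ τ) f g⟩

/-- Hereditarily positive functionals. -/
def Hp (σ : Ty) : El σ → Prop := (HPaux σ).1

/-- The order `≤hp`. -/
def HpLe (σ : Ty) : El σ → El σ → Prop := (HPaux σ).2

/-- `f =hp g` iff `f ≤hp g` and `g ≤hp f`. -/
def HpEq (σ : Ty) (f g : El σ) : Prop := HpLe σ f g ∧ HpLe σ g f

/-- The pair (hereditarily monotone, ≤ on the hereditarily monotone structure),
by recursion on the type.  `f` is hereditarily monotone iff it maps hereditarily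
monotone arguments to hereditarily monotone values, monotonically; the order is
pointwise over hereditarily monotone arguments (i.e. the order of `Ω^mon`). -/
def HMaux : (σ : Ty) → (El σ → Prop) × (El σ → El σ → Prop)
  | .base => ⟨fun _ => True, fun x y => x ≤ y⟩
  | .arrow σ τ =>
      ⟨fun f =>
        (∀ x, (HMaux σ).1 x → (HMaux τ).1 (f x)) ∧
        (∀ x y, (HMaux σ).1 x → (HMaux σ).1 y → (HMaux σ).2 x y → (HMaux τ).2 (f x) (f y)),
       fun f g => ∀ x, (HMaux σ).1 x → (HMaux τ).2 (f x) (g x)⟩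

/-- Hereditarily monotone functionals: the members of the type structure `Ω^mon`. -/
def HM (σ : Ty) : El σ → Prop := (HMaux σ).1

/-- The (pointwise) order of the hereditarily monotone type structure `Ω^mon`. -/
def LeHM (σ : Ty) : El σ → El σ → Prop := (HMaux σ).2

/-- Equality in the hereditarily monotone type structure `Ω^mon`. -/
def EqHM (σ : Ty) (f g : El σ) : Prop := LeHM σ f g ∧ LeHM σ g f

/-!
At an arrow type `limsup` is computed pointwise, so `(limsup_ξ f_ξ) x = limsup_ξ (f_ξ x)`.
Hence, by induction on the type, `limsup` is monotone in the family (for the order of `Ω^mon`)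
as soon as it is monotone on `Ω`; there it holds because every tail `{f_ξ | γ ≤ ξ < ζ}` is
countable, so by regularity of `ω₁` it has a genuine supremum in `Ω`. A second induction on
the type gives the theorem: `limsup_ξ (f_ξ x)` is hereditarily monotone by induction, and
its monotonicity in `x` is monotonicity of `limsup` applied to `f_ξ x ≤ f_ξ y`.
-/

lemma countable_Iio_of_lt_omega_one {ζ : Ordinal} (hζ : ζ < ω₁) : (Set.Iio ζ).Countable := by
  rw [← Cardinal.le_aleph0_iff_set_countable, Cardinal.mk_Iio_ordinal, Cardinal.lift_le_aleph0,
    ← Cardinal.lt_aleph_one_iff, ← Cardinal.lt_ord, Cardinal.ord_aleph]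
  exact hζ

lemma sSup_val_lt_omega_one {S : Set Om} (hS : S.Countable) : sSup (Subtype.val '' S) < ω₁ := by
  have := hS.to_subtype
  rw [sSup_image']
  exact Ordinal.iSup_lt_omega_one fun x => x.1.2

lemma le_supOm {S : Set Om} (hS : S.Countable) {x : Om} (hx : x ∈ S) : x ≤ supOm S := by
  rw [supOm, dif_pos (sSup_val_lt_omega_one hS)]
  exact le_csSup ⟨ω₁, Set.forall_mem_image.2 fun y _ => y.2.le⟩ ⟨x, hx, rfl⟩

lemma supOm_le {S : Set Om} (hS : S.Countable) {b : Om} (hb : ∀ x ∈ S, x ≤ b) :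
    supOm S ≤ b := by
  rw [supOm, dif_pos (sSup_val_lt_omega_one hS)]
  exact csSup_le' (s := Subtype.val '' S) (Set.forall_mem_image.2 hb)

lemma infOm_le {S : Set Om} {x : Om} (hx : x ∈ S) : infOm S ≤ x :=
  csInf_le' (s := Subtype.val '' S) ⟨x, hx, rfl⟩

lemma le_infOm {S : Set Om} (hS : S.Nonempty) {b : Om} (hb : ∀ x ∈ S, b ≤ x) : b ≤ infOm S :=
  le_csInf (s := Subtype.val '' S) (hS.image _) (Set.forall_mem_image.2 hb)

def tailSet {α : Type*} (ζ : Ordinal) (f : ∀ ξ : Ordinal, ξ < ζ → α) (γ : Ordinal) : Set α :=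
  {z | ∃ ξ, ∃ h : ξ < ζ, γ ≤ ξ ∧ z = f ξ h}

lemma countable_tailSet {α : Type*} {ζ : Ordinal} (hζ : ζ < ω₁) (f : ∀ ξ : Ordinal, ξ < ζ → α)
    (γ : Ordinal) : (tailSet ζ f γ).Countable := by
  have := (countable_Iio_of_lt_omega_one hζ).to_subtype
  refine (Set.countable_range fun p : Set.Iio ζ => f p p.2).mono ?_
  rintro _ ⟨ξ, h, -, rfl⟩
  exact ⟨⟨ξ, h⟩, rfl⟩

lemma image_tailSet {α β : Type*} (φ : α → β) {ζ : Ordinal} (f : ∀ ξ : Ordinal, ξ < ζ → α)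
    (γ : Ordinal) : φ '' tailSet ζ f γ = tailSet ζ (fun ξ h => φ (f ξ h)) γ := by
  ext
  constructor
  · rintro ⟨_, ⟨ξ, h, hγξ, rfl⟩, rfl⟩
    exact ⟨ξ, h, hγξ, rfl⟩
  · rintro ⟨ξ, h, hγξ, rfl⟩
    exact ⟨_, ⟨ξ, h, hγξ, rfl⟩, rfl⟩

lemma limsupEl_base_mono {ζ : Ordinal} (hζ : ζ < ω₁) {f g : ∀ ξ : Ordinal, ξ < ζ → Om}
    (hfg : ∀ ξ h, f ξ h ≤ g ξ h) : limsupEl .base ζ f ≤ limsupEl .base ζ g := by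
  rcases eq_zero_or_pos ζ with rfl | hζ₀
  · obtain rfl : f = g := by
      funext ξ h
      exact absurd h (not_lt_bot (a := ξ))
    exact le_rfl
  refine le_infOm (S := {y | ∃ γ, ∃ _ : γ < ζ, y = supOm (tailSet ζ g γ)}) ⟨_, 0, hζ₀, rfl⟩ ?_
  rintro _ ⟨γ, hγ, rfl⟩
  calc limsupEl .base ζ f ≤ supOm (tailSet ζ f γ) := infOm_le ⟨γ, hγ, rfl⟩
    _ ≤ supOm (tailSet ζ g γ) := by
        refine supOm_le (countable_tailSet hζ f γ) ?_
        rintro _ ⟨ξ, h, hγξ, rfl⟩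
        exact (hfg ξ h).trans (le_supOm (countable_tailSet hζ g γ) ⟨ξ, h, hγξ, rfl⟩)

lemma limsupEl_arrow_apply {σ τ : Ty} {ζ : Ordinal} (F : ∀ ξ : Ordinal, ξ < ζ → El (.arrow σ τ))
    (x : El σ) : limsupEl (.arrow σ τ) ζ F x = limsupEl τ ζ (fun ξ h => F ξ h x) := by
  have sup_tail_apply (γ : Ordinal) :
      supEl (.arrow σ τ) (tailSet ζ F γ) x = supEl τ (tailSet ζ (fun ξ h => F ξ h x) γ) :=
    congrArg (supEl τ) (image_tailSet (fun f : El (.arrow σ τ) => f x) F γ)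
  show infEl τ _ = infEl τ _
  congr 1
  ext
  constructor
  · rintro ⟨_, ⟨γ, hγ, rfl⟩, rfl⟩
    exact ⟨γ, hγ, sup_tail_apply γ⟩
  · rintro ⟨γ, hγ, rfl⟩
    exact ⟨_, ⟨γ, hγ, rfl⟩, sup_tail_apply γ⟩

lemma limsupEl_mono (σ : Ty) {ζ : Ordinal} (hζ : ζ < ω₁) {f g : ∀ ξ : Ordinal, ξ < ζ → El σ}
    (hfg : ∀ ξ h, LeHM σ (f ξ h) (g ξ h)) : LeHM σ (limsupEl σ ζ f) (limsupEl σ ζ g) := by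
  induction σ with
  | base => exact limsupEl_base_mono hζ hfg
  | arrow σ τ _ ih =>
    intro x hx
    rw [limsupEl_arrow_apply, limsupEl_arrow_apply]
    exact ih fun ξ h => hfg ξ h x hx

/-- If `f_ξ ∈ Ω^mon_σ` for all `ξ < ζ` (ζ countable), then
`limsup_{ξ→ζ} f_ξ ∈ Ω^mon_σ`. -/
theorem limsup_hm (σ : Ty) (ζ : Ordinal) (hζ : ζ < ω₁)
    (f : ∀ ξ : Ordinal, ξ < ζ → El σ) (hf : ∀ ξ (hξ : ξ < ζ), HM σ (f ξ hξ)) :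
    HM σ (limsupEl σ ζ f) := by
  induction σ with
  | base => trivial
  | arrow σ τ _ ih =>
    refine ⟨fun x hx => ?_, fun x y hx hy hxy => ?_⟩
    · rw [limsupEl_arrow_apply]
      exact ih _ fun ξ h => (hf ξ h).1 x hx
    · rw [limsupEl_arrow_apply, limsupEl_arrow_apply]
      exact limsupEl_mono τ hζ fun ξ h => (hf ξ h).2 x y hx hy hxy

end IterOrd
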